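/- arXiv:2009.05475 — 3 statements merged into one kernel-verified Lean document; each statement's English description precedes it below -/
import Mathlib

section
/- Let 0 < η < 1 and σ > 0, and let v_n² = v_0²(1-η)^{2n} + (2σ²/(2-η))(1 - (1-η)^{2n}) with v_0 > 0. Then v_n² converges to 2σ²/(2-η) as n → ∞, and this limit is strictly greater than σ². -/
open Filter

/-- The closed-form noise variance converges to `2σ²/(2-η)`, which strictly exceeds `σ²`. -/
theorem stmt1 (η σ v0 : ℝ) (hη0 : 0 < η) (hη1 : η < 1) (hσ : 0 < σ) (hv0 : 0 < v0)
    (w : ℕ → ℝ)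
    (hw : ∀ n, w n = v0 ^ 2 * (1 - η) ^ (2 * n) +
      (2 * σ ^ 2 / (2 - η)) * (1 - (1 - η) ^ (2 * n))) :
    Tendsto w atTop (nhds (2 * σ ^ 2 / (2 - η))) ∧ σ ^ 2 < 2 * σ ^ 2 / (2 - η) := by
  have h0 : Tendsto (fun n : ℕ => (1 - η) ^ (2 * n)) atTop (nhds 0) := by
    have : |1 - η| < 1 := by rw [abs_lt]; constructor <;> linarith
    have h := tendsto_pow_atTop_nhds_zero_of_abs_lt_one this
    exact h.comp (tendsto_atTop_atTop_of_monotone (fun a b hab => by omega)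
      (fun b => ⟨b, by omega⟩))
  constructor
  · have : Tendsto (fun n : ℕ => v0 ^ 2 * (1 - η) ^ (2 * n) +
        (2 * σ ^ 2 / (2 - η)) * (1 - (1 - η) ^ (2 * n))) atTop
        (nhds (v0 ^ 2 * 0 + (2 * σ ^ 2 / (2 - η)) * (1 - 0))) := by
      exact ((h0.const_mul _).add (((h0.const_sub 1).const_mul _)))
    simp only [mul_zero, zero_add, sub_zero, mul_one] at this
    exact this.congr (fun n => (hw n).symm)
  · rw [lt_div_iff₀ (by linarith)]
    nlinarith [mul_pos (pow_pos hσ 2) hη0]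
end

section
/- Let 0 < η < 2 and σ > 0 with v_0² > σ². Then for the recursion v_{n+1}² = v_n²(1-η)² + 2ησ², it holds that v_n² > σ² for every n ≥ 0. -/
/-- Proposition 1: under the ALS noise-variance recursion with `0 < η < 2`,
the noise variance stays strictly above `σ²` at every step. -/
theorem stmt3 (η σ : ℝ) (hη0 : 0 < η) (hη2 : η < 2) (hσ : 0 < σ)
    (w : ℕ → ℝ) (h0 : w 0 > σ ^ 2)
    (hrec : ∀ n, w (n + 1) = w n * (1 - η) ^ 2 + 2 * η * σ ^ 2) :
    ∀ n, w n > σ ^ 2 := by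
  intro n
  induction n with
  | zero => exact h0
  | succ n ih =>
    rw [hrec]
    have h1 : (w n - σ ^ 2) * (1 - η) ^ 2 ≥ 0 :=
      mul_nonneg (by linarith) (sq_nonneg _)
    have h2 : σ ^ 2 * η ^ 2 > 0 :=
      mul_pos (pow_pos hσ 2) (pow_pos hη0 2)
    nlinarith
end

section
/- Let 0 < γ < 1, 1 − η < γ with 0 < η < 1, and β² = 1 − (1−η)²/γ². For the CAS update applied to x_t = m_t + σ_t z_t (with z_t standard Gaussian independent of the injected noise z), the updated point x_{t+1} = (1−η)x_t + ηE[x | x_t] + βσ_{t+1}z has noise component with variance exactly γ²σ_t², strictly less than the ALS update's noise variance (1−η)²σ_t² + 2ησ_t², whenever γ² < (1−η)² + 2η. -/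
/-- One step of CAS versus ALS at current noise level `σ_t`: CAS yields noise variance
exactly `γ²σ_t²` (i.e. `(1−η)²σ_t² + β²σ_{t+1}² = γ²σ_t²`), which is strictly less than the
ALS noise variance `(1−η)²σ_t² + 2ησ_t²` whenever `γ² < (1−η)² + 2η`. -/
theorem stmt19 (γ η σt β : ℝ) (hγ0 : 0 < γ) (hγ1 : γ < 1) (hη0 : 0 < η) (hη1 : η < 1)
    (hlt : 1 - η < γ) (hβ : β ^ 2 = 1 - (1 - η) ^ 2 / γ ^ 2) (hσt : 0 < σt) :
    (1 - η) ^ 2 * σt ^ 2 + β ^ 2 * (γ * σt) ^ 2 = γ ^ 2 * σt ^ 2 ∧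
    (γ ^ 2 < (1 - η) ^ 2 + 2 * η →
      γ ^ 2 * σt ^ 2 < (1 - η) ^ 2 * σt ^ 2 + 2 * η * σt ^ 2) := by
  have hγ2 : (γ:ℝ)^2 ≠ 0 := pow_ne_zero _ hγ0.ne'
  constructor
  · rw [hβ]; field_simp; ring
  · intro h
    have := sq_pos_of_pos hσt
    nlinarith
end
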